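/- For every n ≥ 3, there is no combinatorial magic polygon P(n,2) in which the label z (2i+1) of every midpoint is even. -/

import Mathlib

/-!
The `n` midpoint labels are distinct even numbers in `[1, 2n+1]`, so they are exactly
`2, 4, …, 2n`: every vertex label and the centre label are odd, and the midpoints add up to
`n(n+1)`. With `V` the vertex sum, the axes give `V + n(n+1) + nc = nu` and the sides give
`2V + n(n+1) = nu`, so `V = nc`, and the total `V + n(n+1) + c = (2n+1)(n+1)` forces
`c = n + 1`. As `c` is odd, `n` is even, so the axis through vertex `0` joins two vertices and
has odd sum `u`, while every side sum is odd + even + odd.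
-/

/-- The labeling function of a combinatorial magic polygon `P(n,2)`:
the `2n` boundary labels `z p` (even positions are vertices, odd positions are
edge midpoints) together with the center label `c`. -/
def magicLabels2 (n : ℕ) (z : ZMod (2 * n) → ℕ) (c : ℕ) : ZMod (2 * n) ⊕ Unit → ℕ :=
  Sum.elim z (fun _ => c)

/-- `(z, c, u)` is a combinatorial magic polygon `P(n,2)`:
(1) the `2n+1` labels are exactly `1, …, 2n+1`, each occurring once;
(2) every side sum `z (2i) + z (2i+1) + z (2i+2)` equals `u`;
(3) every sum `z p + c + z (p + n)` along a symmetry axis equals `u`. -/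
def IsMagicPolygon2 (n : ℕ) (z : ZMod (2 * n) → ℕ) (c u : ℕ) : Prop :=
  Function.Injective (magicLabels2 n z c) ∧
  Set.range (magicLabels2 n z c) = Set.Icc 1 (2 * n + 1) ∧
  (∀ i : ZMod (2 * n), z (2 * i) + z (2 * i + 1) + z (2 * i + 2) = u) ∧
  (∀ p : ZMod (2 * n), z p + c + z (p + (n : ℕ)) = u)

open Finset

theorem Finset.sum_range_two_mul {M : Type*} [AddCommMonoid M] (g : ℕ → M) (n : ℕ) :
    ∑ k ∈ range (2 * n), g k = ∑ k ∈ range n, (g (2 * k) + g (2 * k + 1)) := by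
  induction n with
  | zero => simp
  | succ n ih => rw [Nat.mul_succ, sum_range_succ, sum_range_succ, ih, sum_range_succ, add_assoc]

theorem Finset.sum_range_comp_succ_of_apply_eq {M : Type*} [AddCommMonoid M]
    [IsRightCancelAdd M] {g : ℕ → M} {n : ℕ} (h : g n = g 0) :
    ∑ k ∈ range n, g (k + 1) = ∑ k ∈ range n, g k :=
  add_right_cancel (b := g 0) (by rw [← sum_range_succ', sum_range_succ, h])

theorem Finset.sum_Icc_one_id_mul_two (m : ℕ) : (∑ i ∈ Icc 1 m, i) * 2 = m * (m + 1) := by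
  induction m with
  | zero => simp
  | succ m ih => rw [sum_Icc_succ_top (by omega), add_mul, ih]; ring

theorem Finset.filter_even_Icc_one_two_mul_add_one (n : ℕ) :
    (Icc 1 (2 * n + 1)).filter Even = (range n).image (fun k => 2 * k + 2) := by
  ext w
  simp only [mem_filter, mem_Icc, mem_image, mem_range, Nat.even_iff]
  constructor
  · rintro ⟨⟨h1, h2⟩, he⟩
    exact ⟨w / 2 - 1, by omega, by omega⟩
  · rintro ⟨k, hk, rfl⟩
    omega

theorem Finset.sum_filter_even_Icc_one_two_mul_add_one (n : ℕ) :
    ∑ w ∈ (Icc 1 (2 * n + 1)).filter Even, w = n * (n + 1) := by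
  rw [filter_even_Icc_one_two_mul_add_one, sum_image fun a _ b _ h => by simpa using h]
  induction n with
  | zero => simp
  | succ n ih => rw [sum_range_succ, ih]; ring

theorem Finset.image_eq_filter_even_Icc_of_injOn {g : ℕ → ℕ} {n : ℕ}
    (hinj : Set.InjOn g (range n)) (hg : ∀ k < n, g k ∈ Icc 1 (2 * n + 1) ∧ Even (g k)) :
    (range n).image g = (Icc 1 (2 * n + 1)).filter Even := by
  refine eq_of_subset_of_card_le ?_ ?_
  · intro w hw
    obtain ⟨k, hk, rfl⟩ := mem_image.1 hw
    exact mem_filter.2 (hg k (mem_range.1 hk))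
  · rw [filter_even_Icc_one_two_mul_add_one, card_image_of_injOn hinj,
      card_image_of_injective _ (fun a b h => by simpa using h)]

namespace ZMod

theorem two_mul_add_one_ne_two_mul {n : ℕ} (a b : ZMod (2 * n)) : 2 * a + 1 ≠ 2 * b := by
  intro h
  have hmod2 := congrArg (castHom (dvd_mul_right 2 n) (ZMod 2)) h
  simp only [map_add, map_mul, map_ofNat, map_one] at hmod2
  rw [show (2 : ZMod 2) = 0 from rfl] at hmod2
  simp at hmod2

theorem sum_eq_sum_range {M : Type*} [AddCommMonoid M] (m : ℕ) [NeZero m] (f : ZMod m → M) :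
    ∑ p, f p = ∑ k ∈ range m, f k :=
  (sum_nbij' (fun k : ℕ => (k : ZMod m)) val (by simp) (fun p _ => mem_range.2 (val_lt p))
    (fun _ hk => val_cast_of_lt (mem_range.1 hk)) (fun p _ => natCast_zmod_val p)
    (fun _ _ => rfl)).symm

theorem injOn_two_mul_add_one (n : ℕ) :
    Set.InjOn (fun k : ℕ => (2 * k + 1 : ZMod (2 * n))) (range n) := by
  intro a ha b hb hab
  have hcast : ((2 * a + 1 : ℕ) : ZMod (2 * n)) = ((2 * b + 1 : ℕ) : ZMod (2 * n)) := by
    push_cast; exact hab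
  rw [natCast_eq_natCast_iff', Nat.mod_eq_of_lt, Nat.mod_eq_of_lt] at hcast
  all_goals simp only [coe_range, Set.mem_Iio] at ha hb; omega

theorem sum_eq_sum_range_even_add_odd {M : Type*} [AddCommMonoid M] (n : ℕ) [NeZero n]
    (f : ZMod (2 * n) → M) : ∑ p, f p = ∑ k ∈ range n, (f (2 * k) + f (2 * k + 1)) := by
  rw [sum_eq_sum_range, sum_range_two_mul]
  push_cast
  rfl

end ZMod

namespace IsMagicPolygon2

variable {n : ℕ} {z : ZMod (2 * n) → ℕ} {c u : ℕ}

theorem injective (h : IsMagicPolygon2 n z c u) : Function.Injective z :=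
  fun _ _ hpq => Sum.inl_injective (h.1 hpq)

theorem ne_center (h : IsMagicPolygon2 n z c u) (p : ZMod (2 * n)) : z p ≠ c :=
  fun hp => Sum.inl_ne_inr (h.1 (a₁ := .inl p) (a₂ := .inr ()) hp)

theorem label_mem_Icc (h : IsMagicPolygon2 n z c u) (x : ZMod (2 * n) ⊕ Unit) :
    magicLabels2 n z c x ∈ Icc 1 (2 * n + 1) := by
  have hx : magicLabels2 n z c x ∈ Set.Icc 1 (2 * n + 1) := h.2.1 ▸ Set.mem_range_self x
  simpa using hx

theorem sum_add_center [NeZero n] (h : IsMagicPolygon2 n z c u) :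
    ∑ p, z p + c = (2 * n + 1) * (n + 1) := by
  have hlabels : univ.image (magicLabels2 n z c) = Icc 1 (2 * n + 1) :=
    coe_injective (by simpa using h.2.1)
  have hsum := sum_Icc_one_id_mul_two (2 * n + 1)
  rw [← hlabels, sum_image (fun _ _ _ _ hxy => h.1 hxy), Fintype.sum_sum_type] at hsum
  simp only [magicLabels2, Sum.elim_inl, univ_unique, sum_singleton, Sum.elim_inr] at hsum
  linarith

theorem sum_add_mul_center [NeZero n] (h : IsMagicPolygon2 n z c u) :
    ∑ p, z p + n * c = n * u := by
  have haxes : ∑ p, (z p + c + z (p + (n : ℕ))) = 2 * n * u := by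
    simp [h.2.2.2, ZMod.card]
  have hrotate : ∑ p, z (p + (n : ℕ)) = ∑ p, z p :=
    Fintype.sum_equiv (Equiv.addRight _) _ _ fun _ => rfl
  rw [sum_add_distrib, sum_add_distrib, hrotate] at haxes
  simp only [sum_const, card_univ, ZMod.card, smul_eq_mul] at haxes
  linarith

theorem sum_sides [NeZero n] (h : IsMagicPolygon2 n z c u) :
    2 * ∑ k ∈ range n, z (2 * k) + ∑ k ∈ range n, z (2 * k + 1) = n * u := by
  have hnext (k : ℕ) : 2 * ((k + 1 : ℕ) : ZMod (2 * n)) = 2 * k + 2 := by push_cast; ring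
  have hsides : ∑ k ∈ range n, (z (2 * k) + z (2 * k + 1) + z (2 * (k + 1 : ℕ))) = n * u := by
    simp only [hnext, h.2.2.1, sum_const, card_range, smul_eq_mul]
  have hperiod : 2 * (n : ZMod (2 * n)) = 0 := by exact_mod_cast ZMod.natCast_self (2 * n)
  have hshift : ∑ k ∈ range n, z (2 * (k + 1 : ℕ)) = ∑ k ∈ range n, z (2 * k) :=
    sum_range_comp_succ_of_apply_eq (g := fun k : ℕ => z (2 * k)) (by simp [hperiod])
  rw [sum_add_distrib, sum_add_distrib, hshift] at hsides
  linarith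

theorem injOn_midpoints (h : IsMagicPolygon2 n z c u) :
    Set.InjOn (fun k : ℕ => z (2 * k + 1)) (range n) :=
  h.injective.comp_injOn (ZMod.injOn_two_mul_add_one n)

theorem image_midpoints (h : IsMagicPolygon2 n z c u)
    (hmid : ∀ i : ZMod (2 * n), Even (z (2 * i + 1))) :
    (range n).image (fun k : ℕ => z (2 * k + 1)) = (Icc 1 (2 * n + 1)).filter Even :=
  image_eq_filter_even_Icc_of_injOn h.injOn_midpoints
    fun k _ => ⟨h.label_mem_Icc (.inl _), hmid k⟩

theorem sum_midpoints (h : IsMagicPolygon2 n z c u)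
    (hmid : ∀ i : ZMod (2 * n), Even (z (2 * i + 1))) :
    ∑ k ∈ range n, z (2 * k + 1) = n * (n + 1) := by
  rw [← sum_filter_even_Icc_one_two_mul_add_one, ← h.image_midpoints hmid,
    sum_image h.injOn_midpoints]

theorem exists_midpoint_eq_of_even (h : IsMagicPolygon2 n z c u)
    (hmid : ∀ i : ZMod (2 * n), Even (z (2 * i + 1))) {w : ℕ} (hw : w ∈ Icc 1 (2 * n + 1))
    (he : Even w) : ∃ k : ℕ, z (2 * k + 1) = w := by
  have hmem : w ∈ (range n).image (fun k : ℕ => z (2 * k + 1)) :=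
    h.image_midpoints hmid ▸ mem_filter.2 ⟨hw, he⟩
  obtain ⟨k, -, hk⟩ := mem_image.1 hmem
  exact ⟨k, hk⟩

theorem odd_center (h : IsMagicPolygon2 n z c u)
    (hmid : ∀ i : ZMod (2 * n), Even (z (2 * i + 1))) : Odd c := by
  refine Nat.not_even_iff_odd.1 fun he => ?_
  obtain ⟨k, hk⟩ := h.exists_midpoint_eq_of_even hmid (h.label_mem_Icc (.inr ())) he
  exact h.ne_center _ hk

theorem odd_vertex (h : IsMagicPolygon2 n z c u)
    (hmid : ∀ i : ZMod (2 * n), Even (z (2 * i + 1))) (j : ZMod (2 * n)) : Odd (z (2 * j)) := by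
  refine Nat.not_even_iff_odd.1 fun he => ?_
  obtain ⟨k, hk⟩ := h.exists_midpoint_eq_of_even hmid (h.label_mem_Icc (.inl _)) he
  exact ZMod.two_mul_add_one_ne_two_mul _ _ (h.injective hk)

theorem center_eq [NeZero n] (h : IsMagicPolygon2 n z c u)
    (hmid : ∀ i : ZMod (2 * n), Even (z (2 * i + 1))) : c = n + 1 := by
  have hsplit := ZMod.sum_eq_sum_range_even_add_odd n z
  rw [sum_add_distrib] at hsplit
  have hc : (n + 1) * c = (n + 1) * (n + 1) := by
    linarith [h.sum_add_center, h.sum_add_mul_center, h.sum_sides, h.sum_midpoints hmid]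
  exact Nat.eq_of_mul_eq_mul_left n.succ_pos hc

theorem even_magicSum (h : IsMagicPolygon2 n z c u)
    (hmid : ∀ i : ZMod (2 * n), Even (z (2 * i + 1))) : Even u := by
  have hnext : (2 * 0 + 2 : ZMod (2 * n)) = 2 * 1 := by ring
  rw [← h.2.2.1 0, hnext]
  exact ((h.odd_vertex hmid 0).add_even (hmid 0)).add_odd (h.odd_vertex hmid 1)

theorem odd_magicSum_of_even (h : IsMagicPolygon2 n z c u)
    (hmid : ∀ i : ZMod (2 * n), Even (z (2 * i + 1))) (hn : Even n) : Odd u := by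
  obtain ⟨m, hm⟩ := hn
  have hopposite : (0 + (n : ℕ) : ZMod (2 * n)) = 2 * (m : ℕ) := by rw [hm]; push_cast; ring
  rw [← h.2.2.2 0, hopposite, ← mul_zero 2]
  exact ((h.odd_vertex hmid 0).add_odd (h.odd_center hmid)).add_odd (h.odd_vertex hmid _)

end IsMagicPolygon2

theorem magicPolygon2_no_all_even_midpoints (n : ℕ) (hn : 3 ≤ n) :
    ¬ ∃ (z : ZMod (2 * n) → ℕ) (c u : ℕ),
      IsMagicPolygon2 n z c u ∧ ∀ i : ZMod (2 * n), Even (z (2 * i + 1)) := by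
  rintro ⟨z, c, u, h, hmid⟩
  have : NeZero n := ⟨by omega⟩
  have hn_even : Even n := by simpa [h.center_eq hmid, Nat.odd_add_one] using h.odd_center hmid
  exact Nat.not_even_iff_odd.2 (h.odd_magicSum_of_even hmid hn_even) (h.even_magicSum hmid)
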